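/- Let n be a natural number and let x_1, …, x_{n+2} be complex roots of unity, none equal to 1, with x_1 + x_2 + ⋯ + x_{n+2} = n. For each i let w_i ≥ 1 be the multiplicative order of x_i, i.e. the least m ≥ 1 with x_i^m = 1. Then, as rational numbers, ∑_{i=1}^{n+2} (1 − μ(w_i)/φ(w_i)) = 2, where μ is the Möbius function and φ is Euler's totient function. -/

import Mathlib

open Finset Polynomial in
lemma sumPrimRoots {K : Type*} [Field K] {N : ℕ} [NeZero N] {η : K}
    (hη : IsPrimitiveRoot η N) {w : ℕ} (hw0 : 0 < w) (hdvd : w ∣ N) :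
    ∑ x ∈ primitiveRoots w K, x = ((ArithmeticFunction.moebius w : ℤ) : K) := by
  classical
  have key := (ArithmeticFunction.sum_eq_iff_sum_smul_moebius_eq_on (R := K)
      (f := fun d => ∑ x ∈ primitiveRoots d K, x)
      (g := fun m => if m = 1 then 1 else 0)
      {m | m ∣ N} (fun m n hmn hn => hmn.trans hn)).mp ?_ w hw0 hdvd
  · rw [← key, Finset.sum_eq_single (w, 1)]
    · simp
    · rintro ⟨a, b⟩ hab hne
      rcases Nat.mem_divisorsAntidiagonal.mp hab with ⟨h1, h2⟩
      have hb : b ≠ 1 := by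
        rintro rfl
        simp only [mul_one] at h1 ⊢
        exact hne (by simp_all)
      simp [hb]
    · intro h
      exact absurd (Nat.mem_divisorsAntidiagonal.mpr ⟨mul_one w, hw0.ne'⟩) h
  · intro m hm hmN
    obtain ⟨k, hk⟩ := hmN
    have hηm : IsPrimitiveRoot (η ^ k) m := hη.pow (NeZero.pos N) (by rw [hk, mul_comm])
    rw [← Finset.sum_biUnion (fun a _ b _ hab => IsPrimitiveRoot.disjoint hab),
      ← IsPrimitiveRoot.nthRoots_one_eq_biUnion_primitiveRoots (n := m)]
    by_cases hm1 : m = 1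
    · subst hm1
      have h2 : nthRootsFinset 1 (1 : K) = {1} := by
        ext z
        rw [mem_nthRootsFinset one_pos _, pow_one, Finset.mem_singleton]
      rw [h2]
      simp
    · have h1 : 1 < m := lt_of_le_of_ne hm (Ne.symm hm1)
      have h0 : (η ^ k) ≠ 0 := fun h => one_ne_zero ((hηm.pow_eq_one).symm.trans (by rw [h, zero_pow hm.ne']))
      have hS : (η ^ k) * ∑ z ∈ nthRootsFinset m (1 : K), z = ∑ z ∈ nthRootsFinset m (1 : K), z := by
        rw [Finset.mul_sum]
        refine Finset.sum_nbij' (fun z => (η ^ k) * z) (fun z => (η ^ k)⁻¹ * z) ?_ ?_ ?_ ?_ ?_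
        · intro z hz
          rw [← mul_one (1 : K)]
          exact mul_mem_nthRootsFinset ((mem_nthRootsFinset hm _).mpr hηm.pow_eq_one) hz
        · intro z hz
          rw [← mul_one (1 : K)]
          refine mul_mem_nthRootsFinset ?_ hz
          rw [mem_nthRootsFinset hm, inv_pow, hηm.pow_eq_one, inv_one]
        · intro z _
          exact inv_mul_cancel_left₀ h0 z
        · intro z _
          exact mul_inv_cancel_left₀ h0 z
        · intro z _
          rfl
      have hne : (η ^ k) - 1 ≠ 0 := sub_ne_zero.mpr (hηm.ne_one h1)
      have : ((η ^ k) - 1) * ∑ z ∈ nthRootsFinset m (1 : K), z = 0 := by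
        rw [sub_mul, one_mul, hS, sub_self]
      rcases mul_eq_zero.mp this with h | h
      · exact absurd h hne
      · rw [h, if_neg hm1]

open Finset Polynomial in
lemma sumPowUnits {K : Type*} [Field K] {N : ℕ} [NeZero N] {η : K}
    (hη : IsPrimitiveRoot η N) {w : ℕ} (hw0 : 0 < w) (hdvd : w ∣ N)
    {y : K} (hy : IsPrimitiveRoot y w) :
    ∑ u : (ZMod N)ˣ, y ^ (u : ZMod N).val
      = (N.totient / w.totient) • ((ArithmeticFunction.moebius w : ℤ) : K) := by
  classical
  haveI : NeZero w := ⟨hw0.ne'⟩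
  set g := ZMod.unitsMap hdvd with hg
  have hsurj : Function.Surjective g := ZMod.unitsMap_surjective hdvd
  have hcard : Fintype.card (ZMod N)ˣ = Fintype.card (ZMod w)ˣ * Fintype.card g.ker := by
    rw [← Nat.card_eq_fintype_card, ← Nat.card_eq_fintype_card, ← Nat.card_eq_fintype_card,
      Subgroup.card_eq_card_quotient_mul_card_subgroup g.ker,
      Nat.card_congr (QuotientGroup.quotientKerEquivOfSurjective g hsurj).toEquiv]
  have hker : Fintype.card g.ker = N.totient / w.totient := by
    rw [ZMod.card_units_eq_totient, ZMod.card_units_eq_totient] at hcard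
    rw [hcard, Nat.mul_div_cancel_left _ (Nat.totient_pos.mpr hw0)]
  -- rewrite each summand through g
  have hstep : ∀ u : (ZMod N)ˣ, y ^ (u : ZMod N).val = y ^ ((g u : ZMod w)).val := by
    intro u
    have h1 : (g u : ZMod w) = ((((u : ZMod N).val : ℕ) : ZMod w)) := by
      rw [hg, ZMod.unitsMap_def, Units.coe_map, MonoidHom.coe_coe, ZMod.castHom_apply,
        ← ZMod.natCast_val]
    rw [h1, ZMod.val_natCast]
    conv_lhs => rw [← pow_mod_orderOf y, ← hy.eq_orderOf]
  calc ∑ u : (ZMod N)ˣ, y ^ (u : ZMod N).val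
      = ∑ u : (ZMod N)ˣ, y ^ ((g u : ZMod w)).val := by
        exact Finset.sum_congr rfl fun u _ => hstep u
    _ = ∑ v : (ZMod w)ˣ, ∑ u ∈ univ.filter (fun u => g u = v), y ^ ((v : ZMod w)).val := by
        rw [Finset.sum_fiberwise_of_maps_to' (fun u _ => Finset.mem_univ (g u))
          (fun v => y ^ ((v : ZMod w)).val)]
    _ = ∑ v : (ZMod w)ˣ, (N.totient / w.totient) • y ^ ((v : ZMod w)).val := by
        refine Finset.sum_congr rfl fun v _ => ?_
        rw [Finset.sum_const]
        congr 1
        rw [← hker, ← Fintype.card_subtype]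
        refine Fintype.card_congr ((Equiv.subtypeEquivRight ?_).trans
          (MonoidHom.fiberEquivKerOfSurjective hsurj v))
        intro u
        simp [Set.mem_preimage]
    _ = (N.totient / w.totient) • ∑ v : (ZMod w)ˣ, y ^ ((v : ZMod w)).val := by
        rw [Finset.smul_sum]
    _ = (N.totient / w.totient) • ((ArithmeticFunction.moebius w : ℤ) : K) := by
        congr 1
        rw [← sumPrimRoots hη hw0 hdvd]
        refine Finset.sum_bij (fun v _ => y ^ ((v : ZMod w)).val) ?_ ?_ ?_ ?_
        · intro v _
          rw [mem_primitiveRoots hw0]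
          exact hy.pow_of_coprime _ (ZMod.val_coe_unit_coprime v)
        · intro v1 _ v2 _ h
          have := hy.pow_inj (ZMod.val_lt _) (ZMod.val_lt _) h
          exact Units.ext ((ZMod.val_injective w) this)
        · intro ξ hξ
          rw [mem_primitiveRoots hw0] at hξ
          obtain ⟨i, hiw, hcop, hpow⟩ := (hy.isPrimitiveRoot_iff).mp hξ
          refine ⟨ZMod.unitOfCoprime i hcop, Finset.mem_univ _, ?_⟩
          show y ^ ((ZMod.unitOfCoprime i hcop : ZMod w)).val = ξ
          rw [ZMod.coe_unitOfCoprime, ZMod.val_natCast, Nat.mod_eq_of_lt hiw, hpow]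
        · intro v _
          rfl

open Finset Polynomial in
theorem stmt7 (n : ℕ) (x : Fin (n + 2) → ℂ) (w : Fin (n + 2) → ℕ)
    (hne1 : ∀ i, x i ≠ 1)
    (hw : ∀ i, 1 ≤ w i ∧ x i ^ w i = 1 ∧ ∀ m : ℕ, 1 ≤ m → x i ^ m = 1 → w i ≤ m)
    (hsum : ∑ i, x i = n) :
    ∑ i, (1 - ((ArithmeticFunction.moebius (w i) : ℤ) : ℚ) / ((Nat.totient (w i) : ℕ) : ℚ))
      = 2 := by
  classical
  have hwpos : ∀ i, 0 < w i := fun i => (hw i).1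
  have hxprim : ∀ i, IsPrimitiveRoot (x i) (w i) := by
    intro i
    obtain ⟨h1, h2, h3⟩ := hw i
    have hfin : IsOfFinOrder (x i) := isOfFinOrder_iff_pow_eq_one.mpr ⟨w i, h1, h2⟩
    have hord : orderOf (x i) = w i :=
      le_antisymm (Nat.le_of_dvd h1 (orderOf_dvd_of_pow_eq_one h2))
        (h3 _ hfin.orderOf_pos (pow_orderOf_eq_one (x i)))
    exact hord ▸ IsPrimitiveRoot.orderOf (x i)
  set N : ℕ := Finset.univ.lcm w with hN
  have hdvd : ∀ i, w i ∣ N := fun i => Finset.dvd_lcm (Finset.mem_univ i)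
  have hNpos : 0 < N := by
    rw [Nat.pos_iff_ne_zero]
    intro h
    rw [hN, Finset.lcm_eq_zero_iff] at h
    obtain ⟨i, -, hi⟩ := h
    exact (hwpos i).ne' hi
  haveI : NeZero N := ⟨hNpos.ne'⟩
  set N' : ℕ+ := ⟨N, hNpos⟩ with hN'
  haveI : NeZero ((N' : ℕ) : ℚ) := ⟨Nat.cast_ne_zero.mpr hNpos.ne'⟩
  set K := CyclotomicField N' ℚ with hK
  haveI : IsCyclotomicExtension {(N' : ℕ)} ℚ K := CyclotomicField.isCyclotomicExtension (N' : ℕ) ℚ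
  set η : K := IsCyclotomicExtension.zeta N' ℚ K with hη'
  have hη : IsPrimitiveRoot η (N' : ℕ) := IsCyclotomicExtension.zeta_spec N' ℚ K
  haveI : FiniteDimensional ℚ K := IsCyclotomicExtension.finiteDimensional {(N' : ℕ)} ℚ K
  haveI : Algebra.IsAlgebraic ℚ K := Algebra.IsAlgebraic.of_finite ℚ K
  set f : K →ₐ[ℚ] ℂ := IsAlgClosed.lift with hf
  have hfinj : Function.Injective f := f.toRingHom.injective
  have hζ : IsPrimitiveRoot (f η) N := hη.map_of_injective hfinj
  -- pick exponents
  have hxN : ∀ i, (x i) ^ N = 1 := by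
    intro i
    obtain ⟨c, hc⟩ := hdvd i
    rw [hc, pow_mul, (hxprim i).pow_eq_one, one_pow]
  choose k hk1 hk2 using fun i => hζ.eq_pow_of_pow_eq_one (hxN i)
  set y : Fin (n + 2) → K := fun i => η ^ k i with hy'
  have hfy : ∀ i, f (y i) = x i := by
    intro i
    rw [hy']
    simp only [map_pow]
    exact hk2 i
  have hyprim : ∀ i, IsPrimitiveRoot (y i) (w i) := by
    intro i
    refine IsPrimitiveRoot.of_map_of_injective ?_ hfinj
    rw [hfy i]
    exact hxprim i
  have hsumy : ∑ i, y i = (n : K) := by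
    apply hfinj
    rw [map_sum, map_natCast]
    simp only [hfy]
    exact hsum
  -- Galois action
  set e := IsCyclotomicExtension.autEquivPow K (Polynomial.cyclotomic.irreducible_rat N'.pos)
    with he
  have hgal : ∀ (u : (ZMod (N' : ℕ))ˣ) i, (e.symm u) (y i) = (y i) ^ (u : ZMod (N' : ℕ)).val := by
    intro u i
    have h1 : (e.symm u) η = η ^ ((hη.autToPow ℚ (e.symm u) : ZMod (N' : ℕ))).val :=
      (hη.autToPow_spec ℚ (e.symm u)).symm
    have h2 : hη.autToPow ℚ (e.symm u) = u := by
      have := e.apply_symm_apply u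
      rwa [he, IsCyclotomicExtension.autEquivPow_apply] at this
    rw [hy']
    simp only [map_pow, h1, h2, ← pow_mul, ← pow_mul']
    rw [mul_comm]
  -- double counting
  set c : Fin (n + 2) → ℕ := fun i => N.totient / (w i).totient with hc'
  have hc : ∀ i, (w i).totient * c i = N.totient := fun i =>
    Nat.mul_div_cancel' (Nat.totient_dvd_of_dvd (hdvd i))
  have hmain : ∑ i, (c i) • ((ArithmeticFunction.moebius (w i) : ℤ) : K)
      = N.totient • (n : K) := by
    have lhs : ∑ u : (ZMod (N' : ℕ))ˣ, (e.symm u) (∑ i, y i)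
        = ∑ i, (c i) • ((ArithmeticFunction.moebius (w i) : ℤ) : K) := by
      have : ∀ u : (ZMod (N' : ℕ))ˣ, (e.symm u) (∑ i, y i)
          = ∑ i, (y i) ^ (u : ZMod (N' : ℕ)).val := by
        intro u
        rw [map_sum]
        exact Finset.sum_congr rfl fun i _ => hgal u i
      rw [Finset.sum_congr rfl fun u _ => this u, Finset.sum_comm]
      exact Finset.sum_congr rfl fun i _ => sumPowUnits hη (hwpos i) (hdvd i) (hyprim i)
    have rhs : ∑ u : (ZMod (N' : ℕ))ˣ, (e.symm u) (∑ i, y i) = N.totient • (n : K) := by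
      rw [Finset.sum_congr rfl fun u _ => by rw [hsumy, map_natCast],
        Finset.sum_const, Finset.card_univ, ZMod.card_units_eq_totient]
      rfl
    rw [← lhs, rhs]
  -- convert to an integer identity
  have hint : ∑ i, ((c i : ℕ) : ℤ) * ArithmeticFunction.moebius (w i)
      = (N.totient : ℤ) * n := by
    have h2 : ∀ i, (c i) • ((ArithmeticFunction.moebius (w i) : ℤ) : K)
        = ((((c i : ℕ) : ℤ) * ArithmeticFunction.moebius (w i) : ℤ) : K) := by
      intro i
      rw [nsmul_eq_mul]
      rw [Int.cast_mul, Int.cast_natCast]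
    have h3 : N.totient • (n : K) = (((N.totient : ℤ) * n : ℤ) : K) := by
      rw [nsmul_eq_mul]
      rw [Int.cast_mul, Int.cast_natCast, Int.cast_natCast]
    apply (Int.cast_injective (α := K))
    calc ((∑ i, ((c i : ℕ) : ℤ) * ArithmeticFunction.moebius (w i) : ℤ) : K)
        = ∑ i, (c i) • ((ArithmeticFunction.moebius (w i) : ℤ) : K) := by
          rw [Int.cast_sum]
          exact Finset.sum_congr rfl fun i _ => (h2 i).symm
      _ = N.totient • (n : K) := hmain
      _ = (((N.totient : ℤ) * n : ℤ) : K) := h3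
  -- totient divisibility
  have htot : ∀ i, ((w i).totient : ℚ) * ((c i : ℕ) : ℚ) = (N.totient : ℚ) := by
    intro i
    rw [← Nat.cast_mul, hc i]
  have hφNpos : (0 : ℚ) < (N.totient : ℚ) := by
    exact_mod_cast Nat.totient_pos.mpr hNpos
  have hφwne : ∀ i, ((w i).totient : ℚ) ≠ 0 := by
    intro i
    exact_mod_cast (Nat.totient_pos.mpr (hwpos i)).ne'
  -- final computation
  have key : ∑ i, ((ArithmeticFunction.moebius (w i) : ℤ) : ℚ) / ((w i).totient : ℚ) = n := by
    have h1 : ∀ i, ((ArithmeticFunction.moebius (w i) : ℤ) : ℚ) / ((w i).totient : ℚ)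
        = (((c i : ℕ) : ℚ) * ((ArithmeticFunction.moebius (w i) : ℤ) : ℚ))
          / (N.totient : ℚ) := by
      intro i
      rw [div_eq_div_iff (hφwne i) hφNpos.ne', ← htot i]
      ring
    rw [Finset.sum_congr rfl fun i _ => h1 i, ← Finset.sum_div]
    rw [show ∑ i, (((c i : ℕ) : ℚ) * ((ArithmeticFunction.moebius (w i) : ℤ) : ℚ))
        = ((N.totient : ℚ) * n) from by exact_mod_cast hint]
    field_simp
  calc ∑ i, (1 - ((ArithmeticFunction.moebius (w i) : ℤ) : ℚ) / ((w i).totient : ℚ))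
      = ∑ i, (1 : ℚ) - ∑ i, ((ArithmeticFunction.moebius (w i) : ℤ) : ℚ) / ((w i).totient : ℚ) := by
        rw [Finset.sum_sub_distrib]
    _ = (n + 2 : ℚ) - n := by rw [key]; simp
    _ = 2 := by ring
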